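/- arXiv:0806.3710 — 3 statements merged into one kernel-verified Lean document; each statement's English description precedes it below -/
import Mathlib

section
/- If U is a grounding set of a directed graph G and C is a (directed) cycle of G, then U ∩ C ≠ ∅. -/
/-- Every element of a chain has a predecessor in the chain (including the head). -/
lemma chain_pred {V : Type*} (E : V → V → Prop) :
    ∀ {a : V} {l : List V}, List.Chain E a l → ∀ x ∈ l, ∃ y ∈ a :: l, E y x := by
  intro a l
  induction l generalizing a with
  | nil => intro _ x hx; simp at hx
  | cons b t ih =>
    intro h x hx
    obtain ⟨hab, ht⟩ := List.chain_cons.mp h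
    rcases List.mem_cons.mp hx with rfl | hx'
    · exact ⟨a, by simp, hab⟩
    · obtain ⟨y, hy, hyx⟩ := ih ht x hx'
      exact ⟨y, by simpa using Or.inr (by simpa using hy), hyx⟩

/-- If `U` is a grounding set of `G` and `C` is a directed cycle of `G`,
then `U` intersects the vertex set of `C`. -/
theorem grounding_meets_cycle {V : Type*} [Fintype V] (E : V → V → Prop)
    (R : Set V → Set V)
    (hR : ∀ U, R U = U ∪ {v | ∀ u, E u v → u ∈ U})
    (Rstar : Set V → Set V)
    (hRstar : ∀ U, Rstar U = ⋃ k : ℕ, R^[k] U)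
    (U : Set V) (hU : Rstar U = Set.univ)
    (c : List V) (hc : ∃ v l, c = v :: l ∧ List.Chain E v (l ++ [v])) :
    ∃ x ∈ U, x ∈ c := by
  by_contra hcon
  push_neg at hcon
  obtain ⟨v, l, rfl, hch⟩ := hc
  -- every vertex on the cycle has a predecessor on the cycle
  have hpred : ∀ x ∈ v :: l, ∃ y ∈ v :: l, E y x := by
    intro x hx
    have hx' : x ∈ l ++ [v] := by
      rcases List.mem_cons.mp hx with rfl | h
      · simp
      · simp [h]
    obtain ⟨y, hy, hyx⟩ := chain_pred E hch x hx'
    refine ⟨y, ?_, hyx⟩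
    rcases List.mem_cons.mp hy with rfl | hy'
    · simp
    · rcases List.mem_append.mp hy' with h | h
      · simp [h]
      · simp at h; simp [h]
  have hk : ∀ k, ∀ x ∈ v :: l, x ∉ R^[k] U := by
    intro k
    induction k with
    | zero => intro x hx hxU; exact hcon x hxU hx
    | succ k ih =>
      intro x hx hxR
      rw [Function.iterate_succ_apply', hR] at hxR
      rcases hxR with h | h
      · exact ih x hx h
      · obtain ⟨y, hy, hyx⟩ := hpred x hx
        exact ih y hy (h y hyx)
  have hv : v ∈ Rstar U := by rw [hU]; trivial
  rw [hRstar] at hv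
  obtain ⟨s, ⟨k, rfl⟩, hvk⟩ := hv
  exact hk k v (by simp) hvk
end

section
/- A subset U of vertices of a finite directed graph G is a grounding set of G if and only if U is a feedback vertex set of G (i.e., U intersects every directed cycle of G). -/
/-!
A set `S` of vertices each of which has an in-neighbour in `S` is never grounded: if `S` avoids
`W` it also avoids `R W`, hence every `R^[k] U`. The vertices of a cycle form such a set.
Conversely, on a finite graph the increasing sequence `R^[k] U` stabilises, so `R* U` is a fixed
point of `R`; every vertex outside `R* U` therefore has an in-neighbour outside `R* U`, and
following in-neighbours inside this finite set must close a cycle, which avoids `U`.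
-/

def IsCycle {α : Type*} (r : α → α → Prop) (c : List α) : Prop :=
  ∃ v l, c = v :: l ∧ (v :: (l ++ [v])).IsChain r

theorem List.IsChain.exists_rel_of_mem {α : Type*} {r : α → α → Prop} {a x : α} {l : List α}
    (h : (a :: l).IsChain r) (hx : x ∈ l) : ∃ y ∈ a :: l, r y x := by
  induction l generalizing a with
  | nil => simp at hx
  | cons b l ih =>
    obtain ⟨hab, hbl⟩ := List.isChain_cons_cons.1 h
    rcases List.mem_cons.1 hx with rfl | hx
    · exact ⟨a, List.mem_cons_self, hab⟩
    · obtain ⟨y, hy, hyx⟩ := ih hbl hx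
      exact ⟨y, List.mem_cons_of_mem a hy, hyx⟩

theorem IsCycle.exists_rel_of_mem {α : Type*} {r : α → α → Prop} {c : List α} {x : α}
    (hc : IsCycle r c) (hx : x ∈ c) : ∃ y ∈ c, r y x := by
  obtain ⟨v, l, rfl, hchain⟩ := hc
  have hmem : ∀ z, z ∈ l ++ [v] ↔ z ∈ v :: l := fun z => by simp [or_comm]
  obtain ⟨y, hy, hyx⟩ := hchain.exists_rel_of_mem ((hmem x).2 hx)
  exact ⟨y, (List.mem_cons.1 hy).elim (· ▸ List.mem_cons_self) (hmem y).1, hyx⟩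

theorem IsCycle.map {α β : Type*} {r : α → α → Prop} {s : β → β → Prop} {c : List α}
    (f : α → β) (hf : ∀ a b, r a b → s (f a) (f b)) (hc : IsCycle r c) :
    IsCycle s (c.map f) := by
  obtain ⟨v, l, rfl, hchain⟩ := hc
  refine ⟨f v, l.map f, rfl, ?_⟩
  simpa using List.isChain_map f |>.2 (hchain.imp hf)

theorem exists_isCycle_of_transGen {α : Type*} {r : α → α → Prop} {x : α}
    (h : Relation.TransGen r x x) : ∃ c, IsCycle r c := by
  obtain ⟨b, hxb, hbx⟩ := Relation.TransGen.head'_iff.1 h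
  obtain ⟨l, hchain, hlast⟩ := List.exists_isChain_cons_of_relationReflTransGen hbx
  have hsplit := List.dropLast_append_getLast (List.cons_ne_nil b l)
  rw [hlast] at hsplit
  refine ⟨x :: (b :: l).dropLast, x, _, rfl, ?_⟩
  rw [hsplit]
  exact List.IsChain.cons_cons hxb hchain

theorem exists_isCycle_of_forall_exists_rel {α : Type*} [Finite α] [Nonempty α]
    {r : α → α → Prop} (h : ∀ b, ∃ a, r a b) : ∃ c, IsCycle r c := by
  by_contra hacyclic
  have hirrefl : ∀ x, ¬ Relation.TransGen r x x := fun x hx =>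
    hacyclic (exists_isCycle_of_transGen hx)
  have : Std.Irrefl (Relation.TransGen r) := ⟨hirrefl⟩
  obtain ⟨m, -, hm⟩ := (Finite.wellFounded_of_trans_of_irrefl (Relation.TransGen r)).has_min
    Set.univ Set.univ_nonempty
  obtain ⟨a, ham⟩ := h m
  exact hm a trivial (.single ham)

theorem exists_isCycle_subset_of_forall_exists_rel {α : Type*} [Finite α] {r : α → α → Prop}
    {S : Set α} (hS : S.Nonempty) (h : ∀ b ∈ S, ∃ a ∈ S, r a b) :
    ∃ c, IsCycle r c ∧ ∀ x ∈ c, x ∈ S := by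
  have : Nonempty S := hS.to_subtype
  obtain ⟨c, hc⟩ := exists_isCycle_of_forall_exists_rel (r := fun a b : S => r a b)
    fun b => let ⟨a, ha, hab⟩ := h b b.2; ⟨⟨a, ha⟩, hab⟩
  refine ⟨c.map Subtype.val, hc.map _ fun _ _ => id, fun x hx => ?_⟩
  obtain ⟨⟨y, hy⟩, -, rfl⟩ := List.mem_map.1 hx
  exact hy

section Grounding

variable {V : Type*} (E : V → V → Prop)

def groundingStep (W : Set V) : Set V := W ∪ {v | ∀ u, E u v → u ∈ W}

def groundingClosure (U : Set V) : Set V := ⋃ k : ℕ, (groundingStep E)^[k] U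

variable {E}

theorem subset_groundingClosure (U : Set V) : U ⊆ groundingClosure E U :=
  Set.subset_iUnion (fun k => (groundingStep E)^[k] U) 0

theorem monotone_iterate_groundingStep (U : Set V) :
    Monotone fun k => (groundingStep E)^[k] U :=
  fun _ _ hkl => Function.monotone_iterate_of_id_le (fun _ => Set.subset_union_left) hkl U

theorem disjoint_groundingStep {S W : Set V} (hS : ∀ x ∈ S, ∃ y ∈ S, E y x)
    (hW : Disjoint S W) : Disjoint S (groundingStep E W) := by
  refine Set.disjoint_union_right.2 ⟨hW, Set.disjoint_left.2 fun x hxS hx => ?_⟩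
  obtain ⟨y, hyS, hyx⟩ := hS x hxS
  exact Set.disjoint_left.1 hW hyS (hx y hyx)

theorem disjoint_groundingClosure {S U : Set V} (hS : ∀ x ∈ S, ∃ y ∈ S, E y x)
    (hU : Disjoint S U) : Disjoint S (groundingClosure E U) := by
  refine Set.disjoint_iUnion_right.2 fun k => ?_
  induction k with
  | zero => exact hU
  | succ k ih => rw [Function.iterate_succ_apply']; exact disjoint_groundingStep hS ih

theorem groundingStep_groundingClosure [Finite V] (U : Set V) :
    groundingStep E (groundingClosure E U) = groundingClosure E U := by
  obtain ⟨n, hn⟩ := WellFoundedGT.monotone_chain_condition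
    ⟨_, monotone_iterate_groundingStep (E := E) U⟩
  have hclosure : groundingClosure E U = (groundingStep E)^[n] U :=
    Set.iUnion_subset (fun k => (monotone_iterate_groundingStep U (le_max_left k n)).trans
      (hn _ (le_max_right k n)).ge) |>.antisymm (Set.subset_iUnion _ n)
  rw [hclosure, ← Function.iterate_succ_apply' (groundingStep E)]
  exact (hn _ n.le_succ).symm

theorem exists_rel_notMem_groundingClosure [Finite V] {U : Set V} {v : V}
    (hv : v ∉ groundingClosure E U) : ∃ u ∉ groundingClosure E U, E u v := by
  rw [← groundingStep_groundingClosure] at hv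
  obtain ⟨-, u, huv, hu⟩ : _ ∧ ∃ u, E u v ∧ u ∉ groundingClosure E U := by
    simpa [groundingStep] using hv
  exact ⟨u, hu, huv⟩

theorem groundingClosure_eq_univ_iff [Finite V] {U : Set V} :
    groundingClosure E U = Set.univ ↔ ∀ c, IsCycle E c → ∃ x ∈ U, x ∈ c := by
  constructor
  · intro h c hc
    by_contra! hcU
    have hdisj := disjoint_groundingClosure (S := {x | x ∈ c})
      (fun x hx => hc.exists_rel_of_mem hx) (Set.disjoint_left.2 fun x hx hxU => hcU x hxU hx)
    obtain ⟨v, l, rfl, -⟩ := hc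
    exact Set.disjoint_left.1 hdisj List.mem_cons_self (h ▸ Set.mem_univ v)
  · intro h
    by_contra hne
    obtain ⟨c, hc, hcS⟩ := exists_isCycle_subset_of_forall_exists_rel
      (Set.nonempty_compl.2 hne) fun v hv => exists_rel_notMem_groundingClosure hv
    obtain ⟨x, hxU, hxc⟩ := h c hc
    exact hcS x hxc (subset_groundingClosure U hxU)

end Grounding

/-- `U` is a grounding set of `G` iff `U` is a feedback vertex set of `G`
(i.e. `U` intersects every directed cycle). -/
theorem grounding_iff_fvs {V : Type*} [Fintype V] (E : V → V → Prop)
    (R : Set V → Set V)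
    (hR : ∀ U, R U = U ∪ {v | ∀ u, E u v → u ∈ U})
    (Rstar : Set V → Set V)
    (hRstar : ∀ U, Rstar U = ⋃ k : ℕ, R^[k] U)
    (U : Set V) :
    Rstar U = Set.univ ↔
      ∀ c : List V, (∃ v l, c = v :: l ∧ List.Chain E v (l ++ [v])) →
        ∃ x ∈ U, x ∈ c := by
  obtain rfl : R = groundingStep E := funext hR
  rw [hRstar]
  exact groundingClosure_eq_univ_iff
end

section
/- Every minimum grounding set of a finite directed graph G is a subset of the grounding kernel K_G of G. -/
/-!
Let `u ∈ U` have all of `N*(u)` inside `V'`. Then `E` is acyclic on the forward-closed set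
`A = N*(u)`, so `U \ A` is still grounding: the vertices outside `A` have all their predecessors
outside `A` and are grounded exactly as before, and the vertices of `A` are then grounded by
well-founded induction along the acyclic relation. Hence `U \ {u}` is a smaller grounding set.
-/

open Set Relation

namespace Grounding

variable {V : Type*} (E : V → V → Prop)

/-- The operator `R`; `groundClosure` is `R*`. -/
def groundStep (U : Set V) : Set V := U ∪ {v | ∀ u, E u v → u ∈ U}

def groundClosure (U : Set V) : Set V := ⋃ k : ℕ, (groundStep E)^[k] U

variable {E}

lemma groundStep_mono : Monotone (groundStep E) := fun _ _ hST =>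
  union_subset_union hST fun _ hv u huv => hST (hv u huv)

lemma subset_groundStep (U : Set V) : U ⊆ groundStep E U := subset_union_left

lemma monotone_iterate_groundStep (U : Set V) : Monotone fun k => (groundStep E)^[k] U :=
  groundStep_mono.monotone_iterate_of_le_map (subset_groundStep U)

lemma groundClosure_mono : Monotone (groundClosure E) := fun _ _ hST =>
  iUnion_mono fun k => groundStep_mono.iterate k hST

lemma groundClosure_subset {U S : Set V} (hUS : U ⊆ S) (hS : groundStep E S ⊆ S) :
    groundClosure E U ⊆ S := by
  refine iUnion_subset fun k => ?_
  induction k with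
  | zero => exact hUS
  | succ k ih =>
    rw [Function.iterate_succ_apply']
    exact (groundStep_mono ih).trans hS

lemma groundStep_groundClosure_subset [Finite V] (U : Set V) :
    groundStep E (groundClosure E U) ⊆ groundClosure E U := by
  rintro v (hv | hpred)
  · exact hv
  have hstage : ∀ p, ∃ k, E p v → p ∈ (groundStep E)^[k] U := fun p => by
    by_cases hp : E p v
    · obtain ⟨k, hk⟩ := mem_iUnion.1 (hpred p hp)
      exact ⟨k, fun _ => hk⟩
    · exact ⟨0, fun h => (hp h).elim⟩
  -- The finitely many in-neighbours of `v` are all grounded by a common stage `N`.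
  choose stage hstage using hstage
  obtain ⟨N, hN⟩ := Finite.bddAbove_range stage
  refine mem_iUnion.2 ⟨N + 1, ?_⟩
  rw [Function.iterate_succ_apply']
  exact Or.inr fun p hp => monotone_iterate_groundStep U (hN ⟨p, rfl⟩) (hstage p hp)

lemma groundClosure_inter_subset [Finite V] (U : Set V) {C : Set V}
    (hC : ∀ p w, E p w → w ∈ C → p ∈ C) :
    groundClosure E U ∩ C ⊆ groundClosure E (U ∩ C) := by
  have key : groundClosure E U ⊆ groundClosure E (U ∩ C) ∪ Cᶜ := by
    refine groundClosure_subset (fun v hv => ?_) ?_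
    · by_cases hvC : v ∈ C
      · exact Or.inl (mem_iUnion.2 ⟨0, hv, hvC⟩)
      · exact Or.inr hvC
    rintro v (hv | hpred)
    · exact hv
    by_cases hvC : v ∈ C
    · refine Or.inl (groundStep_groundClosure_subset _ (Or.inr fun p hp => ?_))
      exact (hpred p hp).resolve_right (not_not.2 (hC p v hp hvC))
    · exact Or.inr hvC
  exact fun v ⟨hv, hvC⟩ => (key hv).resolve_right (not_not.2 hvC)

lemma not_transGen_self_of_scc_eq_singleton {a : V}
    (hscc : {w | ReflTransGen E a w ∧ ReflTransGen E w a} = {a}) (hloop : ¬E a a) :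
    ¬TransGen E a a := by
  intro h
  obtain ⟨b, hab, hba⟩ := TransGen.tail'_iff.1 h
  have hb : b ∈ ({a} : Set V) := hscc ▸ ⟨hab, .single hba⟩
  exact hloop (mem_singleton_iff.1 hb ▸ hba)

lemma wellFounded_restrict_of_forall_not_transGen [Finite V] {A : Set V}
    (hA : ∀ a ∈ A, ¬TransGen E a a) : WellFounded fun a b => E a b ∧ b ∈ A := by
  let r : V → V → Prop := fun a b => E a b ∧ b ∈ A
  have : Std.Irrefl (TransGen r) := ⟨fun a h => by
    obtain ⟨_, _, _, haA⟩ := TransGen.tail'_iff.1 h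
    exact hA a haA (TransGen.mono (fun _ _ hr => hr.1) _ _ h)⟩
  exact Subrelation.wf (TransGen.single (r := r)) (Finite.wellFounded_of_trans_of_irrefl _)

lemma eq_univ_of_wellFounded {S A : Set V} (hS : groundStep E S ⊆ S) (hA : Aᶜ ⊆ S)
    (hwf : WellFounded fun a b => E a b ∧ b ∈ A) : S = univ := by
  refine eq_univ_of_forall fun v => hwf.induction v fun x ih => ?_
  by_cases hx : x ∈ A
  · exact hS (Or.inr fun p hp => ih p ⟨hp, hx⟩)
  · exact hA hx

lemma groundClosure_diff_eq_univ [Finite V] {U A : Set V} (hU : groundClosure E U = univ)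
    (hfwd : ∀ a w, a ∈ A → E a w → w ∈ A) (hacyc : ∀ a ∈ A, ¬TransGen E a a) :
    groundClosure E (U \ A) = univ := by
  refine eq_univ_of_wellFounded (groundStep_groundClosure_subset _) (fun v hv => ?_)
    (wellFounded_restrict_of_forall_not_transGen hacyc)
  refine groundClosure_inter_subset U (C := Aᶜ) (fun p w hpw hw hp => hw (hfwd p w hp hpw)) ?_
  exact ⟨hU ▸ mem_univ v, hv⟩

end Grounding

open Grounding in
/-- Every minimum grounding set of `G` is contained in the grounding kernel. -/
theorem min_grounding_subset_kernel {V : Type*} [Fintype V] (E : V → V → Prop)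
    (R : Set V → Set V)
    (hR : ∀ U, R U = U ∪ {v | ∀ u, E u v → u ∈ U})
    (Rstar : Set V → Set V)
    (hRstar : ∀ U, Rstar U = ⋃ k : ℕ, R^[k] U)
    (V' : Set V)
    (hV' : V' = {u | {w | Relation.ReflTransGen E u w ∧
      Relation.ReflTransGen E w u} = {u} ∧ ¬ E u u})
    (Nstar : V → Set V)
    (hNstar : ∀ u, Nstar u = {v | Relation.ReflTransGen E u v})
    (K : Set V)
    (hK : K = Set.univ \ {u | u ∈ V' ∧ Nstar u ⊆ V'})
    (U : Set V)
    (hground : Rstar U = Set.univ)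
    (hmin : ∀ W : Set V, Rstar W = Set.univ → U.ncard ≤ W.ncard) :
    U ⊆ K := by
  obtain rfl : R = groundStep E := funext hR
  obtain rfl : Rstar = groundClosure E := funext hRstar
  obtain rfl : Nstar = fun u => {v | ReflTransGen E u v} := funext hNstar
  subst hV' hK
  intro u hu
  refine ⟨mem_univ u, fun ⟨_, hNsub⟩ => ?_⟩
  have hacyc : ∀ a ∈ {v | ReflTransGen E u v}, ¬TransGen E a a := fun a ha =>
    not_transGen_self_of_scc_eq_singleton (hNsub ha).1 (hNsub ha).2
  have hsmaller : groundClosure E (U \ {u}) = univ := by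
    refine univ_subset_iff.1 ?_
    rw [← groundClosure_diff_eq_univ hground (fun _ _ ha haw => ha.tail haw) hacyc]
    exact groundClosure_mono (sdiff_subset_sdiff_right (singleton_subset_iff.2 ReflTransGen.refl))
  exact (hmin _ hsmaller).not_gt (ncard_sdiff_singleton_lt_of_mem hu (toFinite U))
end
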